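/- arXiv:2305.03194 — 5 statements merged into one kernel-verified Lean document; each statement's English description precedes it below -/
import Mathlib

section
/- If (X, y) is a minimal violating pair for a set S ⊆ {-1,0,1}^n, then every x ∈ X satisfies y ⪯ x in the outward-oriented poset; that is, for every coordinate i with y_i ≠ 0 and every x ∈ X, x_i = y_i. -/
/-!
If `y i = ±1`, the functional `x ↦ y i * x i` is at most `1` on the cube and equals `1` exactly on
the face `{x | x i = y i}`. A point of the convex hull of `X` attaining the maximum of a functional
that is bounded on `X` is a convex combination of the points of `X` attaining it, so `y` already
lies in the convex hull of `X ∩ {x | x i = y i}`; minimality forces this set to be all of `X`.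
-/

/-- The ternary hypercube `{-1,0,1}^n` as a subset of `ℝ^n`. -/
def ternarySet (n : ℕ) : Set (Fin n → ℝ) :=
  {x | ∀ i, x i = -1 ∨ x i = 0 ∨ x i = 1}

open Finset in
theorem Finset.apply_eq_of_apply_centerMass_eq {𝕜 E ι : Type*} [Field 𝕜] [LinearOrder 𝕜]
    [IsStrictOrderedRing 𝕜] [AddCommGroup E] [Module 𝕜 E] {f : E →ₗ[𝕜] 𝕜} {c : 𝕜}
    {t : Finset ι} {w : ι → 𝕜} {z : ι → E} (hw₀ : ∀ j ∈ t, 0 ≤ w j) (hw₁ : ∑ j ∈ t, w j = 1)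
    (hz : ∀ j ∈ t, f (z j) ≤ c) (hc : f (t.centerMass w z) = c) :
    ∀ j ∈ t, w j ≠ 0 → f (z j) = c := by
  have hsum : ∑ j ∈ t, w j * (c - f (z j)) = 0 := by
    rw [centerMass_eq_of_sum_1 _ _ hw₁, map_sum] at hc
    simp only [map_smul, smul_eq_mul] at hc
    simp only [mul_sub, sum_sub_distrib, ← sum_mul, hw₁, one_mul, hc, sub_self]
  intro j hj hwj
  have := (sum_eq_zero_iff_of_nonneg fun k hk ↦
    mul_nonneg (hw₀ k hk) (sub_nonneg.2 (hz k hk))).1 hsum j hj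
  exact (sub_eq_zero.1 ((mul_eq_zero.1 this).resolve_left hwj)).symm

theorem mem_convexHull_inter_of_le {𝕜 E : Type*} [Field 𝕜] [LinearOrder 𝕜]
    [IsStrictOrderedRing 𝕜] [AddCommGroup E] [Module 𝕜 E] {X : Set E} {y : E}
    {f : E →ₗ[𝕜] 𝕜} {c : 𝕜} (hX : ∀ x ∈ X, f x ≤ c) (hy : y ∈ convexHull 𝕜 X) (hfy : f y = c) :
    y ∈ convexHull 𝕜 (X ∩ {x | f x = c}) := by
  rw [convexHull_eq] at hy
  obtain ⟨ι, t, w, z, hw₀, hw₁, hzX, rfl⟩ := hy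
  have hface := Finset.apply_eq_of_apply_centerMass_eq hw₀ hw₁ (fun j hj ↦ hX _ (hzX j hj)) hfy
  rw [← Finset.centerMass_filter_ne_zero]
  refine Finset.centerMass_mem_convexHull _ (fun j hj ↦ hw₀ j (Finset.mem_filter.1 hj).1) ?_ ?_
  · rw [Finset.sum_filter_ne_zero, hw₁]
    exact one_pos
  · intro j hj
    obtain ⟨hjt, hwj⟩ := Finset.mem_filter.1 hj
    exact ⟨hzX j hjt, hface j hjt hwj⟩

theorem ternary_mul_le_one {a b : ℝ} (ha : a = -1 ∨ a = 0 ∨ a = 1) (hb : b = -1 ∨ b = 0 ∨ b = 1) :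
    a * b ≤ 1 := by
  rcases ha with rfl | rfl | rfl <;> rcases hb with rfl | rfl | rfl <;> norm_num

theorem ternary_mul_eq_one_iff {a b : ℝ} (ha : a = -1 ∨ a = 0 ∨ a = 1) (ha₀ : a ≠ 0)
    (hb : b = -1 ∨ b = 0 ∨ b = 1) : a * b = 1 ↔ b = a := by
  rcases ha with rfl | rfl | rfl <;> rcases hb with rfl | rfl | rfl <;> norm_num at *

theorem stmt_1_general (n : ℕ) (S X : Set (Fin n → ℝ)) (y : Fin n → ℝ)
    (hS : S ⊆ ternarySet n) (hXS : X ⊆ S)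
    (hyT : y ∈ ternarySet n)
    (hyX : y ∈ convexHull ℝ X)
    (hmin : ∀ X' ⊂ X, y ∉ convexHull ℝ X') :
    ∀ x ∈ X, ∀ i, y i ≠ 0 → x i = y i := by
  intro x hx i hyi
  by_contra hne
  have hXT : ∀ x ∈ X, x ∈ ternarySet n := fun x hx ↦ hS (hXS hx)
  let f : (Fin n → ℝ) →ₗ[ℝ] ℝ := y i • LinearMap.proj i
  have hface : y ∈ convexHull ℝ (X ∩ {x | f x = 1}) :=
    mem_convexHull_inter_of_le (fun x hx ↦ ternary_mul_le_one (hyT i) (hXT x hx i)) hyX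
      ((ternary_mul_eq_one_iff (hyT i) hyi (hyT i)).2 rfl)
  refine hmin _ ⟨Set.inter_subset_left, fun hsub ↦ hne ?_⟩ hface
  exact (ternary_mul_eq_one_iff (hyT i) hyi (hXT x hx i)).1 (hsub hx).2

/-- If `(X, y)` is a minimal violating pair for `S ⊆ {-1,0,1}^n`, then every `x ∈ X`
satisfies `y ⪯ x` in the outward-oriented poset: for every coordinate `i` with `y i ≠ 0`,
`x i = y i`. -/
theorem stmt_1 (n : ℕ) (S X : Set (Fin n → ℝ)) (y : Fin n → ℝ)
    (hS : S ⊆ ternarySet n) (hXS : X ⊆ S)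
    (hyT : y ∈ ternarySet n) (hyS : y ∉ S)
    (hyX : y ∈ convexHull ℝ X)
    (hmin : ∀ X' ⊂ X, y ∉ convexHull ℝ X') :
    ∀ x ∈ X, ∀ i, y i ≠ 0 → x i = y i :=
  stmt_1_general n S X y hS hXS hyT hyX hmin
end

section
/- Let S, Q ⊆ {-1,0,1}^n. If Q does not contain any set X ∪ {y} such that (X, y) is a violating pair for S, then there exists a convex set S' ⊆ {-1,0,1}^n with S' ∩ Q = S ∩ Q. -/
theorem convexHull_convexHull_inter_inter {𝕜 E : Type*} [Semiring 𝕜] [PartialOrder 𝕜]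
    [AddCommMonoid E] [Module 𝕜 E] (A T : Set E) :
    convexHull 𝕜 (convexHull 𝕜 A ∩ T) ∩ T = convexHull 𝕜 A ∩ T :=
  Set.Subset.antisymm
    (Set.inter_subset_inter_left _ (convexHull_min Set.inter_subset_left (convex_convexHull 𝕜 A)))
    (Set.subset_inter (subset_convexHull 𝕜 _) Set.inter_subset_right)

theorem stmt_3_general (n : ℕ) (S Q : Set (Fin n → ℝ))
    (hS : S ⊆ ternarySet n)
    (hno : ∀ (X : Set (Fin n → ℝ)) (y : Fin n → ℝ),
      X ⊆ S → y ∈ convexHull ℝ X → y ∈ ternarySet n → y ∉ S →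
      ¬(X ∪ {y} ⊆ Q)) :
    ∃ S' : Set (Fin n → ℝ),
      S' = convexHull ℝ S' ∩ ternarySet n ∧ S' ∩ Q = S ∩ Q := by
  refine ⟨convexHull ℝ (S ∩ Q) ∩ ternarySet n,
    (convexHull_convexHull_inter_inter _ _).symm, Set.Subset.antisymm ?_ ?_⟩
  · rintro y ⟨⟨hy_hull, hy_ternary⟩, hyQ⟩
    refine ⟨by_contra fun hyS => hno (S ∩ Q) y Set.inter_subset_left hy_hull hy_ternary hyS ?_, hyQ⟩
    exact Set.union_subset Set.inter_subset_right (Set.singleton_subset_iff.mpr hyQ)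
  · rintro y ⟨hyS, hyQ⟩
    exact ⟨⟨subset_convexHull ℝ _ ⟨hyS, hyQ⟩, hS hyS⟩, hyQ⟩

/-- If `Q` does not contain any `X ∪ {y}` such that `(X, y)` is a violating pair for `S`,
then there exists a convex set `S'` with `S' ∩ Q = S ∩ Q`. -/
theorem stmt_3 (n : ℕ) (S Q : Set (Fin n → ℝ))
    (hS : S ⊆ ternarySet n) (hQ : Q ⊆ ternarySet n)
    (hno : ∀ (X : Set (Fin n → ℝ)) (y : Fin n → ℝ),
      X ⊆ S → y ∈ convexHull ℝ X → y ∈ ternarySet n → y ∉ S →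
      ¬(X ∪ {y} ⊆ Q)) :
    ∃ S' : Set (Fin n → ℝ),
      S' = convexHull ℝ S' ∩ ternarySet n ∧ S' ∩ Q = S ∩ Q :=
  stmt_3_general n S Q hS hno
end

section
/- Let (U, V, E) be a bipartite graph and Δ > 0 such that every vertex in U has degree exactly Δ and every vertex in V has degree at least Δ. Then there exists a matching M ⊆ E of size |M| ≥ (1 − 1/e)·|V|. -/
/-!
Hall's theorem already gives a matching that saturates `V`, which is stronger than the bound
`(1 - 1/e)·|V|`. Hall's condition comes from double counting: the edges at a set `s ⊆ V`
number at least `Δ·|s|`, and they all leave the neighbourhood `N(s) ⊆ U`, whose vertices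
carry at most `Δ` edges each, so `Δ·|s| ≤ Δ·|N(s)|`.
-/

open Finset

namespace BipartiteEdges

variable {α β : Type*} {E : Finset (α × β)} {Δ : ℕ}

def leftNeighbors [DecidableEq α] [DecidableEq β] (E : Finset (α × β)) (b : β) : Finset α :=
  {e ∈ E | e.2 = b}.image Prod.fst

@[simp]
theorem mem_leftNeighbors [DecidableEq α] [DecidableEq β] {a : α} {b : β} :
    a ∈ leftNeighbors E b ↔ (a, b) ∈ E := by
  simp [leftNeighbors]

theorem mul_card_le_card_filter_snd_mem [DecidableEq β] {s : Finset β}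
    (hs : ∀ b ∈ s, Δ ≤ #{e ∈ E | e.2 = b}) : Δ * #s ≤ #{e ∈ E | e.2 ∈ s} :=
  mul_card_image_le_card_of_maps_to (fun e he => (mem_filter.1 he).2) Δ fun b hb => by
    rw [filter_filter]
    refine (hs b hb).trans_eq (congrArg card (filter_congr fun e _ => ?_))
    exact ⟨fun h => ⟨h ▸ hb, h⟩, And.right⟩

theorem card_le_mul_card_image_fst [DecidableEq α] {F : Finset (α × β)} (hF : F ⊆ E)
    (hleft : ∀ e ∈ E, #{e' ∈ E | e'.1 = e.1} ≤ Δ) : #F ≤ Δ * #(F.image Prod.fst) :=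
  card_le_mul_card_image F Δ fun a ha => by
    obtain ⟨e, he, rfl⟩ := mem_image.1 ha
    exact (card_le_card (filter_subset_filter _ hF)).trans (hleft e (hF he))

theorem card_le_card_biUnion_leftNeighbors [DecidableEq α] [DecidableEq β] (hΔ : 0 < Δ)
    (hleft : ∀ e ∈ E, #{e' ∈ E | e'.1 = e.1} ≤ Δ) {s : Finset β}
    (hs : ∀ b ∈ s, Δ ≤ #{e ∈ E | e.2 = b}) : #s ≤ #(s.biUnion (leftNeighbors E)) := by
  have hnbhd : {e ∈ E | e.2 ∈ s}.image Prod.fst ⊆ s.biUnion (leftNeighbors E) := by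
    intro a ha
    obtain ⟨e, he, rfl⟩ := mem_image.1 ha
    exact mem_biUnion.2 ⟨e.2, (mem_filter.1 he).2, mem_leftNeighbors.2 (mem_filter.1 he).1⟩
  refine Nat.le_of_mul_le_mul_left ?_ hΔ
  calc Δ * #s ≤ #{e ∈ E | e.2 ∈ s} := mul_card_le_card_filter_snd_mem hs
    _ ≤ Δ * #({e ∈ E | e.2 ∈ s}.image Prod.fst) :=
      card_le_mul_card_image_fst (filter_subset _ _) hleft
    _ ≤ Δ * #(s.biUnion (leftNeighbors E)) := Nat.mul_le_mul_left Δ (card_le_card hnbhd)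

theorem exists_injective_mem_of_degree_le [DecidableEq α] [DecidableEq β] (hΔ : 0 < Δ)
    (hleft : ∀ e ∈ E, #{e' ∈ E | e'.1 = e.1} ≤ Δ) {V : Finset β}
    (hV : ∀ b ∈ V, Δ ≤ #{e ∈ E | e.2 = b}) :
    ∃ f : V → α, Function.Injective f ∧ ∀ b, (f b, b.1) ∈ E := by
  obtain ⟨f, hf, hfE⟩ := (all_card_le_biUnion_card_iff_exists_injective
    fun b : V => leftNeighbors E b).1 fun s => by
      have hs := card_le_card_biUnion_leftNeighbors hΔ hleft (s := s.image Subtype.val)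
        (by simpa using fun b hb _ => hV b hb)
      rwa [card_image_of_injective _ Subtype.val_injective, image_biUnion] at hs
  exact ⟨f, hf, fun b => mem_leftNeighbors.1 (hfE b)⟩

theorem exists_matching_card_eq_of_injective [DecidableEq α] [DecidableEq β] {V : Finset β}
    {f : V → α} (hf : Function.Injective f) (hfE : ∀ b, (f b, b.1) ∈ E) :
    ∃ M ⊆ E, (∀ e ∈ M, ∀ e' ∈ M, e ≠ e' → e.1 ≠ e'.1 ∧ e.2 ≠ e'.2) ∧
      #M = #V := by
  refine ⟨V.attach.image fun b => (f b, b.1), ?_, ?_, ?_⟩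
  · intro e he
    obtain ⟨b, -, rfl⟩ := mem_image.1 he
    exact hfE b
  · simp only [mem_image, mem_attach, true_and]
    rintro _ ⟨b, rfl⟩ _ ⟨b', rfl⟩ hne
    have hbb' : b ≠ b' := by rintro rfl; exact hne rfl
    exact ⟨hf.ne hbb', Subtype.val_injective.ne hbb'⟩
  · rw [card_image_of_injective _ fun b b' h => Subtype.ext (congrArg Prod.snd h), card_attach]

end BipartiteEdges

open BipartiteEdges in
/-- Let `(U, V, E)` be a bipartite graph in which every vertex of `U` has degree exactly
`Δ > 0` and every vertex of `V` has degree at least `Δ`. Then there is a matching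
`M ⊆ E` of size `|M| ≥ (1 − 1/e)·|V|`. -/
theorem stmt_6 {α β : Type*} [DecidableEq α] [DecidableEq β]
    (U : Finset α) (V : Finset β) (E : Finset (α × β)) (Δ : ℕ) (hΔ : 0 < Δ)
    (hE : E ⊆ U ×ˢ V)
    (hU : ∀ a ∈ U, (E.filter (fun e => e.1 = a)).card = Δ)
    (hV : ∀ b ∈ V, Δ ≤ (E.filter (fun e => e.2 = b)).card) :
    ∃ M ⊆ E, (∀ e ∈ M, ∀ e' ∈ M, e ≠ e' → e.1 ≠ e'.1 ∧ e.2 ≠ e'.2) ∧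
      (1 - 1 / Real.exp 1) * V.card ≤ (M.card : ℝ) := by
  have hleft : ∀ e ∈ E, #{e' ∈ E | e'.1 = e.1} ≤ Δ := fun e he =>
    (hU e.1 (mem_product.1 (hE he)).1).le
  obtain ⟨f, hf, hfE⟩ := exists_injective_mem_of_degree_le hΔ hleft hV
  obtain ⟨M, hME, hM, hcard⟩ := exists_matching_card_eq_of_injective hf hfE
  refine ⟨M, hME, hM, ?_⟩
  rw [hcard]
  exact mul_le_of_le_one_left (Nat.cast_nonneg _) (sub_le_self _ (by positivity))
end

section
/- For all n, all τ with c₁√n ≤ τ ≤ c₂ n^{3/4}, and all ℓ ≤ c₃ √n (for appropriate constants c₁, c₂, c₃), the tail probability over uniform x ∈ {±1}^{n+ℓ} that Σ x_i > τ is at most a constant multiple of the tail probability over uniform x ∈ {±1}^n that Σ x_i > τ. -/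
/-!
Count sign vectors by their number `k` of `+1` entries: there are `C(m, k)` of them, each with
sum `2k - m`. Split the tail of `n + ℓ` signs at `τ + ℓ`. Beyond `τ + ℓ`, forgetting the last `ℓ`
signs (which move the sum by at most `ℓ`) costs a factor `2^ℓ` and lands in the tail of `n` signs
beyond `τ`. In the band `(τ, τ + ℓ]` the deviation `d = 2k - (n + ℓ)` is `O(n^{3/4})`; there we
compare `C(n + ℓ, k)` with `C(n, k - ℓ/2)`, adding two signs at a time: each step multiplies the
binomial coefficient by at most `4 (1 + 2d²/n²)`, so the whole shift costs `2^ℓ exp(O(ℓ d²/n²))`,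
and `ℓ d² = O(√n · n^{3/2}) = O(n²)`.
-/

/-- The probability that a sum of `m` independent uniform `±1` signs exceeds `τ`. -/
noncomputable def tailProb (m : ℕ) (τ : ℝ) : ℝ :=
  (((Fintype.piFinset fun _ : Fin m => ({-1, 1} : Finset ℝ)).filter
      (fun x => τ < ∑ i, x i)).card : ℝ) / 2 ^ m

open Finset

noncomputable def tailCount (m : ℕ) (τ : ℝ) : ℕ :=
  ∑ k ∈ (range (m + 1)).filter (fun k : ℕ => τ < 2 * k - m), m.choose k

noncomputable def bandCount (m : ℕ) (τ σ : ℝ) : ℕ :=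
  ∑ k ∈ (range (m + 1)).filter (fun k : ℕ => τ < 2 * k - m ∧ 2 * k - m ≤ σ), m.choose k

def signVector {m : ℕ} (s : Finset (Fin m)) : Fin m → ℝ := fun i => if i ∈ s then 1 else -1

lemma signVector_injective (m : ℕ) : Function.Injective (signVector (m := m)) := by
  intro s t hst
  ext i
  have := congr_fun hst i
  by_cases hs : i ∈ s <;> by_cases ht : i ∈ t <;> simp_all [signVector] <;> norm_num at this

lemma image_univ_signVector (m : ℕ) :
    (univ : Finset (Finset (Fin m))).image signVector =
      Fintype.piFinset fun _ : Fin m => ({-1, 1} : Finset ℝ) := by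
  ext x
  simp only [mem_image, mem_univ, true_and, Fintype.mem_piFinset, mem_insert, mem_singleton]
  constructor
  · rintro ⟨s, rfl⟩ i
    by_cases hi : i ∈ s <;> simp [signVector, hi]
  · intro hx
    refine ⟨univ.filter (fun i => x i = 1), funext fun i => ?_⟩
    rcases hx i with h | h <;> norm_num [signVector, h]

lemma sum_signVector {m : ℕ} (s : Finset (Fin m)) : ∑ i, signVector s i = 2 * #s - m := by
  have hcard : (#(univ \ s) : ℝ) = m - #s := by
    rw [card_univ_sdiff, Fintype.card_fin, Nat.cast_sub (by simpa using card_le_univ s)]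
  simp [signVector, sum_ite, filter_not, hcard]
  ring

lemma tailProb_eq_tailCount_div (m : ℕ) (τ : ℝ) : tailProb m τ = tailCount m τ / 2 ^ m := by
  rw [tailProb, ← image_univ_signVector, filter_image,
    card_image_of_injective _ (signVector_injective m)]
  congr 2
  simp_rw [sum_signVector]
  rw [card_filter, ← powerset_univ,
    sum_powerset_apply_card (fun k => if τ < 2 * (k : ℝ) - m then 1 else 0), tailCount, sum_filter]
  simp

lemma sum_choose_sub_le_tailCount {n j : ℕ} {τ : ℝ} {S : Finset ℕ}
    (hS : ∀ k ∈ S, j ≤ k ∧ τ + 2 * j + n < 2 * k) :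
    ∑ k ∈ S, n.choose (k - j) ≤ tailCount n τ := by
  have hinj : Set.InjOn (· - j) S := fun a ha b hb hab => by
    have := (hS a ha).1; have := (hS b hb).1; simp only at hab; omega
  rw [← sum_image (g := (· - j)) (f := n.choose) hinj]
  refine sum_le_sum_of_ne_zero fun i hi hne => ?_
  obtain ⟨k, hk, rfl⟩ := mem_image.mp hi
  obtain ⟨hjk, hkτ⟩ := hS k hk
  have hkn : k - j ≤ n := by
    by_contra h
    exact hne (Nat.choose_eq_zero_of_lt (by omega))
  refine mem_filter.mpr ⟨mem_range.mpr (by omega), ?_⟩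
  push_cast [Nat.cast_sub hjk]
  linarith

lemma tailCount_succ_le {m : ℕ} {τ : ℝ} (hτ : 0 ≤ τ) :
    tailCount (m + 1) (τ + 1) ≤ 2 * tailCount m τ := by
  set S := (range (m + 1 + 1)).filter (fun k : ℕ => τ + 1 < 2 * k - ((m + 1 : ℕ) : ℝ))
  have hS : ∀ k ∈ S, 1 ≤ k ∧ τ + 2 * (1 : ℕ) + m < 2 * k := by
    intro k hk
    have hk := (mem_filter.mp hk).2
    push_cast at hk ⊢
    refine ⟨?_, by linarith⟩
    have : (0 : ℝ) < k := by linarith [(Nat.cast_nonneg m : (0 : ℝ) ≤ m)]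
    exact_mod_cast this
  calc tailCount (m + 1) (τ + 1)
      = ∑ k ∈ S, (m.choose (k - 1) + m.choose (k - 0)) := by
        refine sum_congr rfl fun k hk => ?_
        obtain ⟨k, rfl⟩ := Nat.exists_eq_add_of_le' (hS k hk).1
        simp [Nat.choose_succ_succ']
    _ ≤ tailCount m τ + tailCount m τ := by
        rw [sum_add_distrib]
        refine add_le_add (sum_choose_sub_le_tailCount hS) (sum_choose_sub_le_tailCount ?_)
        intro k hk
        have := (hS k hk).2
        push_cast at this ⊢
        exact ⟨Nat.zero_le _, by linarith⟩
    _ = 2 * tailCount m τ := by ring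

lemma tailCount_add_add_le (n ℓ : ℕ) {τ : ℝ} (hτ : 0 ≤ τ) :
    tailCount (n + ℓ) (τ + ℓ) ≤ 2 ^ ℓ * tailCount n τ := by
  induction ℓ with
  | zero => simp
  | succ ℓ ih =>
    calc tailCount (n + (ℓ + 1)) (τ + (ℓ + 1 : ℕ))
        = tailCount (n + ℓ + 1) (τ + ℓ + 1) := by push_cast; ring_nf
      _ ≤ 2 * tailCount (n + ℓ) (τ + ℓ) := tailCount_succ_le (by positivity)
      _ ≤ 2 ^ (ℓ + 1) * tailCount n τ := by
        rw [pow_succ, mul_comm _ 2, mul_assoc]; exact Nat.mul_le_mul_left 2 ih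

lemma tailCount_eq_bandCount_add {m : ℕ} {τ σ : ℝ} (h : τ ≤ σ) :
    tailCount m τ = bandCount m τ σ + tailCount m σ := by
  rw [tailCount, tailCount, bandCount,
    ← sum_filter_add_sum_filter_not _ (fun k : ℕ => 2 * (k : ℝ) - m ≤ σ), filter_filter,
    filter_filter]
  congr 2
  exact filter_congr fun k _ =>
    ⟨fun hk => lt_of_not_ge hk.2, fun hk => ⟨h.trans_lt hk, not_le.mpr hk⟩⟩

lemma choose_add_two_succ_mul (m j : ℕ) :
    (m + 2).choose (j + 1) * ((j + 1) * (m + 1 - j)) = m.choose j * ((m + 1) * (m + 2)) := by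
  have h₁ := Nat.add_one_mul_choose_eq m j
  have h₂ := Nat.choose_mul_succ_eq (m + 1) (j + 1)
  rw [show m + 1 + 1 - (j + 1) = m + 1 - j by omega] at h₂
  calc (m + 2).choose (j + 1) * ((j + 1) * (m + 1 - j))
      = (m + 1 + 1).choose (j + 1) * (m + 1 - j) * (j + 1) := by ring
    _ = (m + 1).choose (j + 1) * (j + 1) * (m + 2) := by rw [← h₂]; ring
    _ = m.choose j * ((m + 1) * (m + 2)) := by rw [← h₁]; ring

lemma choose_add_two_succ_le {m j : ℕ} {y : ℝ} (hj : j ≤ m) (hy₀ : 0 ≤ y) (hy : y ≤ 1 / 2)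
    (hd : (2 * j - m : ℝ) ^ 2 ≤ y * (m + 2) ^ 2) :
    ((m + 2).choose (j + 1) : ℝ) ≤ 4 * (1 + 2 * y) * m.choose j := by
  have hid : ((m + 2).choose (j + 1) : ℝ) * ((j + 1) * (m + 1 - j)) =
      m.choose j * ((m + 1) * (m + 2)) := by
    have := congrArg (Nat.cast (R := ℝ)) (choose_add_two_succ_mul m j)
    push_cast [Nat.cast_sub (show j ≤ m + 1 by omega)] at this
    exact this
  have hm : (j : ℝ) ≤ m := by exact_mod_cast hj
  have hC : (0 : ℝ) ≤ m.choose j := by positivity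
  have hC' : (0 : ℝ) ≤ (m + 2).choose (j + 1) := by positivity
  -- `4 (j + 1) (m + 1 - j) = (m + 2)² - (2j - m)²`
  have hshrink : (1 - y) * (m + 2).choose (j + 1) ≤ 4 * m.choose j := by
    have h4 : (1 - y) * (m + 2) ^ 2 ≤ 4 * ((j + 1) * (m + 1 - j)) := by nlinarith
    refine le_of_mul_le_mul_right ?_ (by positivity : (0 : ℝ) < (m + 2) ^ 2)
    calc (1 - y) * (m + 2).choose (j + 1) * (m + 2) ^ 2
        ≤ (m + 2).choose (j + 1) * (4 * ((j + 1) * (m + 1 - j))) := by nlinarith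
      _ = 4 * m.choose j * ((m + 1) * (m + 2)) := by
        rw [← mul_assoc, mul_comm _ (4 : ℝ), mul_assoc, hid, mul_assoc]
      _ ≤ 4 * m.choose j * (m + 2) ^ 2 := by gcongr; nlinarith
  calc ((m + 2).choose (j + 1) : ℝ) ≤ (1 + 2 * y) * ((1 - y) * (m + 2).choose (j + 1)) := by
        nlinarith [mul_nonneg (mul_nonneg hy₀ (by linarith : (0 : ℝ) ≤ 1 - 2 * y)) hC']
    _ ≤ (1 + 2 * y) * (4 * m.choose j) := by gcongr
    _ = 4 * (1 + 2 * y) * m.choose j := by ring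

lemma choose_add_two_mul_add_le {n k : ℕ} {y : ℝ} (hk : k ≤ n) (hy₀ : 0 ≤ y) (hy : y ≤ 1 / 2)
    (hd : (2 * k - n : ℝ) ^ 2 ≤ y * n ^ 2) (h : ℕ) :
    ((n + 2 * h).choose (k + h) : ℝ) ≤ (4 * (1 + 2 * y)) ^ h * n.choose k := by
  induction h with
  | zero => simp
  | succ h ih =>
    have hd' : (2 * (k + h : ℕ) - (n + 2 * h : ℕ) : ℝ) ^ 2 ≤ y * ((n + 2 * h : ℕ) + 2) ^ 2 := by
      push_cast
      calc (2 * (k + h) - (n + 2 * h) : ℝ) ^ 2 = (2 * k - n) ^ 2 := by ring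
        _ ≤ y * n ^ 2 := hd
        _ ≤ y * (n + 2 * h + 2) ^ 2 := by gcongr; linarith
    calc ((n + 2 * (h + 1)).choose (k + (h + 1)) : ℝ)
        = ((n + 2 * h + 2).choose (k + h + 1) : ℝ) := by ring_nf
      _ ≤ 4 * (1 + 2 * y) * (n + 2 * h).choose (k + h) :=
        choose_add_two_succ_le (by omega) hy₀ hy hd'
      _ ≤ 4 * (1 + 2 * y) * ((4 * (1 + 2 * y)) ^ h * n.choose k) := by gcongr
      _ = (4 * (1 + 2 * y)) ^ (h + 1) * n.choose k := by ring

lemma choose_add_le_choose_add_two_mul (n k ℓ : ℕ) :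
    (n + ℓ).choose (k + ℓ / 2) ≤ (n + 2 * ((ℓ + 1) / 2)).choose (k + (ℓ + 1) / 2) := by
  rcases Nat.even_or_odd' ℓ with ⟨h, rfl | rfl⟩
  · rw [show (2 * h + 1) / 2 = h by omega, show 2 * h / 2 = h by omega]
  · rw [show (2 * h + 1 + 1) / 2 = h + 1 by omega, show (2 * h + 1) / 2 = h by omega,
      show n + 2 * (h + 1) = n + (2 * h + 1) + 1 by ring, show k + (h + 1) = k + h + 1 by ring,
      Nat.choose_succ_succ']
    exact Nat.le_add_right _ _

lemma choose_add_half_le {n k ℓ : ℕ} {y : ℝ} (hk : k ≤ n) (hy₀ : 0 ≤ y) (hy : y ≤ 1 / 2)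
    (hd : (2 * k - n : ℝ) ^ 2 ≤ y * n ^ 2) :
    ((n + ℓ).choose (k + ℓ / 2) : ℝ) ≤ 2 ^ (ℓ + 1) * Real.exp (y * (ℓ + 1)) * n.choose k := by
  set h := (ℓ + 1) / 2
  have h2h : 2 * h ≤ ℓ + 1 := by omega
  have hexp : (1 + 2 * y) ^ h ≤ Real.exp (y * (ℓ + 1)) := calc
    (1 + 2 * y) ^ h ≤ Real.exp (2 * y) ^ h := by
      gcongr; linarith [Real.add_one_le_exp (2 * y)]
    _ = Real.exp (y * (2 * h : ℕ)) := by rw [← Real.exp_nat_mul]; push_cast; ring_nf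
    _ ≤ Real.exp (y * (ℓ + 1)) := by
      gcongr; exact_mod_cast h2h
  calc ((n + ℓ).choose (k + ℓ / 2) : ℝ) ≤ (n + 2 * h).choose (k + h) := by
        exact_mod_cast choose_add_le_choose_add_two_mul n k ℓ
    _ ≤ (4 * (1 + 2 * y)) ^ h * n.choose k := choose_add_two_mul_add_le hk hy₀ hy hd h
    _ = 2 ^ (2 * h) * (1 + 2 * y) ^ h * n.choose k := by rw [mul_pow, pow_mul]; norm_num
    _ ≤ 2 ^ (ℓ + 1) * Real.exp (y * (ℓ + 1)) * n.choose k := by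
        gcongr
        · norm_num

lemma bandCount_le {n ℓ : ℕ} {τ y : ℝ} (hτ : 0 ≤ τ) (hy₀ : 0 ≤ y) (hy : y ≤ 1 / 2)
    (hd : (τ + ℓ + 1) ^ 2 ≤ y * n ^ 2) :
    (bandCount (n + ℓ) τ (τ + ℓ) : ℝ) ≤ 2 ^ (ℓ + 1) * Real.exp (y * (ℓ + 1)) * tailCount n τ := by
  set B := (range (n + ℓ + 1)).filter
    (fun k : ℕ => τ < 2 * k - (n + ℓ : ℕ) ∧ 2 * k - (n + ℓ : ℕ) ≤ τ + ℓ)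
  set j := ℓ / 2
  have hj : (2 * j : ℝ) ≤ ℓ ∧ (ℓ : ℝ) ≤ 2 * j + 1 := by
    constructor <;> norm_cast <;> omega
  have hB : ∀ k ∈ B, j ≤ k ∧ τ + 2 * j + n < 2 * k := by
    intro k hk
    have hk := (mem_filter.mp hk).2.1
    push_cast at hk
    refine ⟨?_, by linarith⟩
    have : (2 * j : ℝ) < 2 * k := by linarith [(Nat.cast_nonneg n : (0 : ℝ) ≤ n)]
    exact_mod_cast (by linarith : (j : ℝ) < k).le
  have hterm : ∀ k ∈ B, ((n + ℓ).choose k : ℝ) ≤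
      2 ^ (ℓ + 1) * Real.exp (y * (ℓ + 1)) * n.choose (k - j) := by
    intro k hk
    obtain ⟨hjk, hkτ⟩ := hB k hk
    have hkσ := (mem_filter.mp hk).2.2
    have hcast : ((k - j : ℕ) : ℝ) = k - j := Nat.cast_sub hjk
    push_cast at hkσ
    have hdev : (2 * (k - j : ℕ) - n : ℝ) ^ 2 ≤ y * n ^ 2 := by
      rw [hcast]
      exact le_trans (pow_le_pow_left₀ (by linarith) (by linarith) 2) hd
    have hkn : k - j ≤ n := by
      have : (2 * (k - j : ℕ) - n : ℝ) ≤ n := by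
        nlinarith [(Nat.cast_nonneg n : (0 : ℝ) ≤ n)]
      rw [hcast] at this
      exact_mod_cast (by linarith : ((k - j : ℕ) : ℝ) ≤ n)
    have := choose_add_half_le (ℓ := ℓ) hkn hy₀ hy hdev
    rwa [Nat.sub_add_cancel hjk] at this
  calc (bandCount (n + ℓ) τ (τ + ℓ) : ℝ)
      ≤ ∑ k ∈ B, 2 ^ (ℓ + 1) * Real.exp (y * (ℓ + 1)) * (n.choose (k - j) : ℝ) := by
        rw [bandCount, Nat.cast_sum]; exact sum_le_sum hterm
    _ = 2 ^ (ℓ + 1) * Real.exp (y * (ℓ + 1)) * ((∑ k ∈ B, n.choose (k - j) : ℕ) : ℝ) := by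
        rw [← mul_sum]; push_cast; rfl
    _ ≤ 2 ^ (ℓ + 1) * Real.exp (y * (ℓ + 1)) * tailCount n τ := by
        gcongr; exact_mod_cast sum_choose_sub_le_tailCount hB

theorem tailProb_add_le {n ℓ : ℕ} {τ y : ℝ} (hτ : 0 ≤ τ) (hy₀ : 0 ≤ y) (hy : y ≤ 1 / 2)
    (hd : (τ + ℓ + 1) ^ 2 ≤ y * n ^ 2) :
    tailProb (n + ℓ) τ ≤ (2 * Real.exp (y * (ℓ + 1)) + 1) * tailProb n τ := by
  have hsplit := tailCount_eq_bandCount_add (m := n + ℓ)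
    (le_add_of_nonneg_right (Nat.cast_nonneg ℓ) : τ ≤ τ + ℓ)
  have hfar : (tailCount (n + ℓ) (τ + ℓ) : ℝ) ≤ 2 ^ ℓ * tailCount n τ := by
    exact_mod_cast tailCount_add_add_le n ℓ hτ
  rw [tailProb_eq_tailCount_div, tailProb_eq_tailCount_div, hsplit, Nat.cast_add,
    div_le_iff₀ (by positivity)]
  calc _ ≤ 2 ^ (ℓ + 1) * Real.exp (y * (ℓ + 1)) * tailCount n τ + 2 ^ ℓ * tailCount n τ :=
        add_le_add (bandCount_le hτ hy₀ hy hd) hfar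
    _ = _ := by rw [pow_add]; field_simp; ring

lemma rpow_quarter_pow {x : ℝ} (hx : 0 ≤ x) (k : ℕ) :
    (x ^ (1 / 4 : ℝ)) ^ k = x ^ ((k : ℝ) / 4) := by
  rw [← Real.rpow_natCast, ← Real.rpow_mul hx]; ring_nf

lemma tailProb_add_le_of_pow_quarter {n ℓ : ℕ} {τ q c₂ c₃ : ℝ} (hq₄ : q ^ 4 = n) (hq₁ : 1 ≤ q)
    (hq : 2 * (c₂ + c₃ + 1) ^ 2 ≤ q ^ 2) (hτ₀ : 0 ≤ τ) (hτ : τ ≤ c₂ * q ^ 3)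
    (hℓ : (ℓ : ℝ) ≤ c₃ * q ^ 2) :
    tailProb (n + ℓ) τ ≤ (2 * Real.exp ((c₂ + c₃ + 1) ^ 2 * (c₃ + 1)) + 1) * tailProb n τ := by
  set K := c₂ + c₃ + 1
  have hq₂ : 0 < q ^ 2 := by positivity
  have hc₃ : 0 ≤ c₃ := nonneg_of_mul_nonneg_left ((Nat.cast_nonneg ℓ).trans hℓ) hq₂
  have hdev : τ + ℓ + 1 ≤ K * q ^ 3 := by
    have : q ^ 2 ≤ q ^ 3 := pow_le_pow_right₀ hq₁ (by norm_num)
    have : 1 ≤ q ^ 3 := one_le_pow₀ hq₁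
    nlinarith
  have key := tailProb_add_le (n := n) (ℓ := ℓ) (y := K ^ 2 / q ^ 2) hτ₀ (by positivity)
    (by rw [div_le_iff₀ hq₂]; linarith) (by
      rw [← hq₄]
      calc (τ + ℓ + 1) ^ 2 ≤ (K * q ^ 3) ^ 2 := pow_le_pow_left₀ (by positivity) hdev 2
        _ = K ^ 2 / q ^ 2 * (q ^ 4) ^ 2 := by field_simp)
  refine key.trans (mul_le_mul_of_nonneg_right ?_ (by unfold tailProb; positivity))
  gcongr 2 * Real.exp ?_ + 1
  calc K ^ 2 / q ^ 2 * (ℓ + 1) ≤ K ^ 2 / q ^ 2 * ((c₃ + 1) * q ^ 2) := by gcongr; nlinarith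
    _ = K ^ 2 * (c₃ + 1) := by field_simp

theorem stmt_12_general (c₁ c₂ c₃ : ℝ) (h₁ : 0 < c₁) :
    ∃ C : ℝ, 0 < C ∧ ∃ N : ℕ, ∀ n ℓ : ℕ, N ≤ n → ∀ τ : ℝ,
      c₁ * Real.sqrt n ≤ τ → τ ≤ c₂ * (n : ℝ) ^ ((3 : ℝ) / 4) →
      (ℓ : ℝ) ≤ c₃ * Real.sqrt n →
      tailProb (n + ℓ) τ ≤ C * tailProb n τ := by
  set K := c₂ + c₃ + 1
  refine ⟨2 * Real.exp (K ^ 2 * (c₃ + 1)) + 1, by positivity, ⌈4 * K ^ 4⌉₊ + 1, ?_⟩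
  intro n ℓ hn τ hτ₁ hτ₂ hℓ
  have hn₀ : (0 : ℝ) ≤ n := n.cast_nonneg
  set q := (n : ℝ) ^ (1 / 4 : ℝ)
  have hq₀ : 0 ≤ q := by positivity
  have hq₄ : q ^ 4 = n := by rw [rpow_quarter_pow hn₀]; norm_num
  rw [Real.sqrt_eq_rpow, show (1 / 2 : ℝ) = (2 : ℕ) / 4 by norm_num, ← rpow_quarter_pow hn₀]
    at hτ₁ hℓ
  rw [show (3 / 4 : ℝ) = (3 : ℕ) / 4 by norm_num, ← rpow_quarter_pow hn₀] at hτ₂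
  have hnK : 4 * K ^ 4 + 1 ≤ q ^ 4 := by
    have : ((⌈4 * K ^ 4⌉₊ + 1 : ℕ) : ℝ) ≤ n := by exact_mod_cast hn
    push_cast at this
    linarith [Nat.le_ceil (4 * K ^ 4)]
  have hK₄ : 0 ≤ K ^ 4 := by positivity
  have hq₁ : 1 ≤ q := le_of_pow_le_pow_left₀ four_ne_zero hq₀ (by linarith [one_pow (M := ℝ) 4])
  have hqK : 2 * K ^ 2 ≤ q ^ 2 := le_of_pow_le_pow_left₀ two_ne_zero (by positivity)
    (by linarith [show (2 * K ^ 2) ^ 2 = 4 * K ^ 4 by ring, show (q ^ 2) ^ 2 = q ^ 4 by ring])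
  exact tailProb_add_le_of_pow_quarter hq₄ hq₁ hqK (le_trans (by positivity) hτ₁) hτ₂ hℓ

/-- For all (sufficiently large) `n`, all `τ` with `c₁√n ≤ τ ≤ c₂ n^{3/4}`, and all
`ℓ ≤ c₃√n`, the tail probability `P_{x∼{±1}^{n+ℓ}}[Σ x_i > τ]` is at most a constant
multiple of `P_{x∼{±1}^n}[Σ x_i > τ]`. -/
theorem stmt_12 (c₁ c₂ c₃ : ℝ) (h₁ : 0 < c₁) (h₂ : 0 < c₂) (h₃ : 0 < c₃) :
    ∃ C : ℝ, 0 < C ∧ ∃ N : ℕ, ∀ n ℓ : ℕ, N ≤ n → ∀ τ : ℝ,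
      c₁ * Real.sqrt n ≤ τ → τ ≤ c₂ * (n : ℝ) ^ ((3 : ℝ) / 4) →
      (ℓ : ℝ) ≤ c₃ * Real.sqrt n →
      tailProb (n + ℓ) τ ≤ C * tailProb n τ :=
  stmt_12_general c₁ c₂ c₃ h₁
end

section
/- Every set S in the support of the yes-distribution D_yes (defined from random Talagrand-style DNF terms on {-1,0,1}^n) is convex; more generally, any set S ⊆ {-1,0,1}^n that is downward closed under the outward-oriented poset (i.e., y ∉ S and y ⪯ x implies x ∉ S) is convex. -/
/-- The outward-oriented order `y ⪯ x` on `{-1,0,1}^n`. -/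
def OutwardLE {n : ℕ} (y x : Fin n → ℝ) : Prop :=
  ∀ i, y i ≠ 0 → x i = y i

lemma ternary_mul_le_mul_self {a b : ℝ} (ha : a = -1 ∨ a = 0 ∨ a = 1)
    (hb : b = -1 ∨ b = 0 ∨ b = 1) : a * b ≤ a * a := by
  rcases ha with rfl | rfl | rfl <;> rcases hb with rfl | rfl | rfl <;> norm_num

lemma ternary_mul_le_mul_self_sub_one {a b : ℝ} (ha : a = -1 ∨ a = 0 ∨ a = 1)
    (hb : b = -1 ∨ b = 0 ∨ b = 1) (ha0 : a ≠ 0) (hba : b ≠ a) : a * b ≤ a * a - 1 := by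
  rcases ha with rfl | rfl | rfl <;> rcases hb with rfl | rfl | rfl <;> norm_num at *

lemma dotProduct_le_dotProduct_self_sub_one {n : ℕ} {x z : Fin n → ℝ}
    (hx : x ∈ ternarySet n) (hz : z ∈ ternarySet n) (h : ¬ OutwardLE x z) :
    x ⬝ᵥ z ≤ x ⬝ᵥ x - 1 := by
  obtain ⟨i, hxi, hzi⟩ : ∃ i, x i ≠ 0 ∧ z i ≠ x i := by simpa [OutwardLE] using h
  rw [dotProduct, dotProduct, ← Finset.add_sum_erase _ _ (Finset.mem_univ i),
    ← Finset.add_sum_erase _ _ (Finset.mem_univ i)]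
  have hrest : ∑ j ∈ Finset.univ.erase i, x j * z j ≤ ∑ j ∈ Finset.univ.erase i, x j * x j :=
    Finset.sum_le_sum fun j _ => ternary_mul_le_mul_self (hx j) (hz j)
  linarith [ternary_mul_le_mul_self_sub_one (hx i) (hz i) hxi hzi]

lemma notMem_convexHull_of_forall_not_outwardLE {n : ℕ} {x : Fin n → ℝ}
    {T : Set (Fin n → ℝ)} (hx : x ∈ ternarySet n) (hT : T ⊆ ternarySet n)
    (hup : ∀ z ∈ T, ¬ OutwardLE x z) : x ∉ convexHull ℝ T := by
  have hsep : T ⊆ {z | x ⬝ᵥ z ≤ x ⬝ᵥ x - 1} := fun z hz =>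
    dotProduct_le_dotProduct_self_sub_one hx (hT hz) (hup z hz)
  have hconv : Convex ℝ {z | x ⬝ᵥ z ≤ x ⬝ᵥ x - 1} :=
    convex_halfSpace_le ⟨dotProduct_add x, fun c z => dotProduct_smul c x z⟩ _
  intro hmem
  have : x ⬝ᵥ x ≤ x ⬝ᵥ x - 1 := convexHull_min hsep hconv hmem
  linarith

/-- Any `S ⊆ {-1,0,1}^n` that is downward closed under the outward-oriented poset
(i.e. `y ∉ S` and `y ⪯ x` implies `x ∉ S`) is convex: `S = Conv(S) ∩ {-1,0,1}^n`.
In particular every set in the support of the yes-distribution `D_yes` of random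
Talagrand-style DNFs, being of this form, is convex. -/
theorem stmt_19 (n : ℕ) (S : Set (Fin n → ℝ)) (hS : S ⊆ ternarySet n)
    (hdown : ∀ y ∈ ternarySet n, ∀ x ∈ ternarySet n,
      y ∉ S → (∀ i, y i ≠ 0 → x i = y i) → x ∉ S) :
    S = convexHull ℝ S ∩ ternarySet n := by
  refine (Set.subset_inter (subset_convexHull ℝ S) hS).antisymm ?_
  rintro x ⟨hxS, hx⟩
  by_contra hxS'
  exact notMem_convexHull_of_forall_not_outwardLE hx hS
    (fun z hz hxz => hdown x hx z (hS hz) hxS' hxz hz) hxS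
end
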